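/- arXiv:2504.08289 — 3 statements merged into one kernel-verified Lean document; each statement's English description precedes it below -/
import Mathlib

section
/- Let s = 1/4 and let f : ℤ → ℝ be the indicator function of the singleton {1}. Then there exists a constant C > 0 such that for every integer x > 1, G(f)(x) ≥ C · (x−1)^{−3/4}, where G(f)(x) = (∫₀^∞ |∇(P_t f)|²(x) dt)^{1/2}. -/
/-!
By Wendel's inequality `Γ(x + a) ≤ x^a Γ(x)` (log-convexity of `Γ`), `K_s(m) ≍ |m|^(-1-2s)`; the
upper bound makes `L = (-Δ)^s` a bounded operator on `ℓ²(ℤ)`, so that `u(t) = exp(-tL) δ₁` is the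
heat flow of the indicator `δ₁` of `{1}`. Symmetrizing the double sum gives the Dirichlet form
identity `∑ₓ |∇g|²(x) = 2⟪Lg, g⟫`, while `d/dt ‖u(t)‖² = -2⟪Lu(t), u(t)⟫`. Hence
`t ↦ |∇u(t)|²(x)` is dominated by the integrable `-d/dt ‖u(t)‖²` on `(0, ∞)`; this is needed
because the Bochner integral of a non-integrable function is `0`.

For the lower bound, `u(t)` stays `1/4`-close to `δ₁` in `ℓ²` for `t ∈ (0, t₀]`, so for `x ≠ 1` the
single term `y = 1` gives `|∇u(t)|²(x) ≥ K_s(x - 1) / 4 ≥ c |x - 1|^(-1-2s)`. Integrating over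
`(0, t₀]` gives `G(f)(x)² ≥ c t₀ |x - 1|^(-1-2s)`, that is `(x - 1)^(-3/2)` for `s = 1/4`.
-/

open MeasureTheory Real

/-- The kernel `K_s` of the fractional discrete Laplacian on `ℤ`. -/
noncomputable def Ker (s : ℝ) (m : ℤ) : ℝ :=
  if m = 0 then 0
  else ((4 : ℝ) ^ s * Real.Gamma (1 / 2 + s) / (Real.sqrt Real.pi * |Real.Gamma (-s)|)) *
    (Real.Gamma ((m.natAbs : ℝ) - s) / Real.Gamma ((m.natAbs : ℝ) + 1 + s))

/-- The fractional discrete Laplacian `L = (-Δ)^s` acting pointwise. -/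
noncomputable def Lop (s : ℝ) (f : ℤ → ℝ) : ℤ → ℝ :=
  fun x => ∑' y : ℤ, (f x - f y) * Ker s (x - y)

/-- The heat semigroup `P_t = exp (-t L)`, given by the exponential series of the
bounded operator `-tL` (evaluated pointwise). -/
noncomputable def heat (s t : ℝ) (f : ℤ → ℝ) : ℤ → ℝ :=
  fun x => ∑' n : ℕ, ((-t) ^ n / (n.factorial : ℝ)) * ((Lop s)^[n] f x)

/-- The squared modulus of the gradient, `|∇f|²(x) = Σ_y K_s(y-x) (f x - f y)²`. -/
noncomputable def gradSq (s : ℝ) (f : ℤ → ℝ) (x : ℤ) : ℝ :=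
  ∑' y : ℤ, Ker s (y - x) * (f x - f y) ^ 2

/-- The squared modulus of the modified gradient,
`|∇̃f|²(x) = Σ_{y : |f y| < |f x|} K_s(y-x) (f x - f y)²`. -/
noncomputable def mgradSq (s : ℝ) (f : ℤ → ℝ) (x : ℤ) : ℝ :=
  ∑' y : {y : ℤ // |f y| < |f x|}, Ker s ((y : ℤ) - x) * (f x - f (y : ℤ)) ^ 2

/-- The `ℓ^q` norm on `ℤ` with counting measure (for finite `q`). -/
noncomputable def lqNorm (q : ℝ) (f : ℤ → ℝ) : ℝ :=
  (∑' x : ℤ, |f x| ^ q) ^ (1 / q)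

namespace Real

theorem Gamma_add_le_rpow_mul_Gamma {x a : ℝ} (hx : 0 < x) (ha : a ∈ Set.Ioo 0 1) :
    Gamma (x + a) ≤ x ^ a * Gamma x := by
  have hconv := Gamma_mul_add_mul_le_rpow_Gamma_mul_rpow_Gamma hx (by linarith : 0 < x + 1)
    (sub_pos.2 ha.2) ha.1 (sub_add_cancel 1 a)
  have hGx := Gamma_pos_of_pos hx
  rwa [show (1 - a) * x + a * (x + 1) = x + a by ring, Gamma_add_one hx.ne',
    mul_rpow hx.le hGx.le, ← mul_assoc, mul_comm (Gamma x ^ (1 - a)), mul_assoc,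
    ← rpow_add hGx, sub_add_cancel, rpow_one] at hconv

theorem mul_rpow_mul_Gamma_le_mul_Gamma_add {x a : ℝ} (hx : 0 < x) (ha : a ∈ Set.Ioo 0 1) :
    x * (x + a) ^ a * Gamma x ≤ (x + a) * Gamma (x + a) := by
  have hxa : 0 < x + a := by linarith [ha.1]
  have h := Gamma_add_le_rpow_mul_Gamma hxa (a := 1 - a)
    ⟨by linarith [ha.2], by linarith [ha.1]⟩
  rw [show x + a + (1 - a) = x + 1 by ring, Gamma_add_one hx.ne', rpow_sub hxa, rpow_one] at h
  calc x * (x + a) ^ a * Gamma x = x * Gamma x * (x + a) ^ a := by ring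
    _ ≤ (x + a) / (x + a) ^ a * Gamma (x + a) * (x + a) ^ a := by gcongr
    _ = (x + a) * Gamma (x + a) := by field_simp

section

variable {s n : ℝ}

lemma rpow_neg_one_add_two_mul (hn : 0 < n) : n ^ (-(1 + 2 * s)) = (n * (n ^ s) ^ 2)⁻¹ := by
  rw [rpow_neg hn.le, rpow_add hn, rpow_one, two_mul, rpow_add hn, sq]

lemma Gamma_sub_div_Gamma_add_le (hs : s ∈ Set.Ioo 0 1) (hn : 1 ≤ n) :
    Gamma (n - s) / Gamma (n + 1 + s) ≤ n ^ (-(1 + 2 * s)) / (1 - s) := by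
  have hn0 : 0 < n := by linarith
  have hns : 0 < n - s := by linarith [hs.2]
  have hp : 0 < n ^ s := rpow_pos_of_pos hn0 s
  have hA := mul_rpow_mul_Gamma_le_mul_Gamma_add hns hs
  have hB := mul_rpow_mul_Gamma_le_mul_Gamma_add hn0 hs
  rw [sub_add_cancel] at hA
  have hmono : n ^ s ≤ (n + s) ^ s := rpow_le_rpow hn0.le (by linarith [hs.1]) hs.1.le
  have hlin : (1 - s) * n ≤ n - s := by nlinarith [hs.1]
  have hGs := Gamma_pos_of_pos (by linarith [hs.1] : 0 < n + s)
  rw [add_assoc, add_comm 1 s, ← add_assoc, Gamma_add_one (by linarith [hs.1]),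
    rpow_neg_one_add_two_mul hn0,
    div_le_div_iff₀ (mul_pos (by linarith [hs.1]) hGs) (by linarith [hs.2]),
    ← div_eq_inv_mul, le_div_iff₀ (by positivity)]
  calc Gamma (n - s) * (1 - s) * (n * (n ^ s) ^ 2)
      = (1 - s) * n * (n ^ s * Gamma (n - s)) * n ^ s := by ring
    _ ≤ (n - s) * (n ^ s * Gamma (n - s)) * n ^ s := by gcongr
    _ ≤ n * Gamma n * n ^ s := by nlinarith
    _ = n * n ^ s * Gamma n := by ring
    _ ≤ n * (n + s) ^ s * Gamma n := by gcongr
    _ ≤ (n + s) * Gamma (n + s) := hB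

lemma rpow_div_two_le_Gamma_sub_div_Gamma_add (hs : s ∈ Set.Ioo 0 1) (hn : 1 ≤ n) :
    n ^ (-(1 + 2 * s)) / 2 ≤ Gamma (n - s) / Gamma (n + 1 + s) := by
  have hn0 : 0 < n := by linarith
  have hns : 0 < n - s := by linarith [hs.2]
  have hA := Gamma_add_le_rpow_mul_Gamma hns hs
  have hB := Gamma_add_le_rpow_mul_Gamma hn0 hs
  rw [sub_add_cancel] at hA
  have hmono : (n - s) ^ s ≤ n ^ s := rpow_le_rpow hns.le (by linarith [hs.1]) hs.1.le
  have hGs := Gamma_pos_of_pos (by linarith [hs.1] : 0 < n + s)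
  rw [add_assoc, add_comm 1 s, ← add_assoc, Gamma_add_one (by linarith [hs.1]),
    rpow_neg_one_add_two_mul hn0, div_le_div_iff₀ two_pos (mul_pos (by linarith [hs.1]) hGs),
    inv_mul_eq_div, div_le_iff₀ (by positivity)]
  calc (n + s) * Gamma (n + s) ≤ (2 * n) * (n ^ s * Gamma n) := by gcongr; linarith [hs.2]
    _ ≤ (2 * n) * (n ^ s * ((n - s) ^ s * Gamma (n - s))) := by gcongr
    _ ≤ (2 * n) * (n ^ s * (n ^ s * Gamma (n - s))) := by gcongr
    _ = Gamma (n - s) * 2 * (n * (n ^ s) ^ 2) := by ring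

end

end Real

section Kernel

open Real

variable {s : ℝ}

noncomputable def kerConst (s : ℝ) : ℝ :=
  (4 : ℝ) ^ s * Gamma (1 / 2 + s) / (√π * |Gamma (-s)|)

lemma kerConst_pos (hs : s ∈ Set.Ioo 0 1) : 0 < kerConst s := by
  have hΓ : Gamma (-s) ≠ 0 := by
    refine Gamma_ne_zero fun m hm => ?_
    have hsm : s = m := neg_inj.1 hm
    rcases Nat.eq_zero_or_pos m with rfl | hm1
    · exact hs.1.ne' (by simpa using hsm)
    · exact hs.2.not_ge (hsm ▸ by exact_mod_cast hm1)
  have : 0 < Gamma (1 / 2 + s) := Gamma_pos_of_pos (by linarith [hs.1])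
  unfold kerConst
  positivity

lemma Ker_of_ne_zero {m : ℤ} (hm : m ≠ 0) :
    Ker s m = kerConst s * (Gamma (m.natAbs - s) / Gamma (m.natAbs + 1 + s)) := by
  rw [Ker, if_neg hm, kerConst]

lemma Ker_neg (m : ℤ) : Ker s (-m) = Ker s m := by
  simp only [Ker, neg_eq_zero, Int.natAbs_neg]

lemma Ker_sub_comm (x y : ℤ) : Ker s (x - y) = Ker s (y - x) := by
  rw [← neg_sub, Ker_neg]

lemma one_le_natAbs_cast {m : ℤ} (hm : m ≠ 0) : (1 : ℝ) ≤ m.natAbs := by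
  exact_mod_cast Int.natAbs_pos.2 hm

lemma Ker_nonneg (hs : s ∈ Set.Ioo 0 1) (m : ℤ) : 0 ≤ Ker s m := by
  rcases eq_or_ne m 0 with rfl | hm
  · simp [Ker]
  have h1 := one_le_natAbs_cast hm
  have : 0 < Gamma (m.natAbs - s) := Gamma_pos_of_pos (by linarith [hs.2])
  have : 0 < Gamma (m.natAbs + 1 + s) := Gamma_pos_of_pos (by linarith [hs.1])
  rw [Ker_of_ne_zero hm]
  exact mul_nonneg (kerConst_pos hs).le (by positivity)

lemma Ker_le (hs : s ∈ Set.Ioo 0 1) (m : ℤ) :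
    Ker s m ≤ kerConst s / (1 - s) * |(m : ℝ)| ^ (-(1 + 2 * s)) := by
  rcases eq_or_ne m 0 with rfl | hm
  · simp only [Ker, if_true]
    have := kerConst_pos hs
    have : 0 < 1 - s := by linarith [hs.2]
    positivity
  rw [Ker_of_ne_zero hm, ← Int.cast_abs, ← Nat.cast_natAbs]
  exact (mul_le_mul_of_nonneg_left (Gamma_sub_div_Gamma_add_le hs (one_le_natAbs_cast hm))
    (kerConst_pos hs).le).trans_eq (by ring)

lemma le_Ker (hs : s ∈ Set.Ioo 0 1) {m : ℤ} (hm : m ≠ 0) :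
    kerConst s / 2 * |(m : ℝ)| ^ (-(1 + 2 * s)) ≤ Ker s m := by
  rw [Ker_of_ne_zero hm, ← Int.cast_abs, ← Nat.cast_natAbs]
  exact (mul_le_mul_of_nonneg_left (rpow_div_two_le_Gamma_sub_div_Gamma_add hs
    (one_le_natAbs_cast hm)) (kerConst_pos hs).le).trans_eq' (by ring)

lemma summable_Ker (hs : s ∈ Set.Ioo 0 1) : Summable (Ker s) := by
  have hnat : Summable fun n : ℕ => kerConst s / (1 - s) * (n : ℝ) ^ (-(1 + 2 * s)) :=
    (summable_nat_rpow.2 (by linarith [hs.1])).mul_left _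
  refine Summable.of_nonneg_of_le (Ker_nonneg hs) (Ker_le hs) (.of_nat_of_neg ?_ ?_) <;>
    simpa using hnat

end Kernel

local notation "ℓ²" => lp (fun _ : ℤ => ℝ) 2

open scoped InnerProductSpace

lemma memℓp_comp_sub (m : ℤ) (f : ℓ²) : Memℓp (fun x => f (x - m)) 2 :=
  memℓp_gen <| (Equiv.subRight m).summable_iff.2 ((lp.memℓp f).summable (by norm_num))

noncomputable def transl (m : ℤ) : ℓ² →L[ℝ] ℓ² :=
  LinearMap.mkContinuous
    { toFun := fun f => ⟨fun x => f (x - m), memℓp_comp_sub m f⟩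
      map_add' := fun _ _ => rfl
      map_smul' := fun _ _ => rfl } 1
    fun f => by
      rw [one_mul, lp.norm_eq_tsum_rpow (by norm_num), lp.norm_eq_tsum_rpow (by norm_num)]
      exact (congrArg (· ^ (1 / (2 : ENNReal).toReal))
        ((Equiv.subRight m).tsum_eq fun x => ‖f x‖ ^ (2 : ENNReal).toReal)).le

lemma norm_transl_le (m : ℤ) : ‖transl m‖ ≤ 1 :=
  LinearMap.mkContinuous_norm_le _ zero_le_one _

section Laplacian

variable {s : ℝ}

noncomputable def lapOp (s : ℝ) : ℓ² →L[ℝ] ℓ² := ∑' m, Ker s m • (1 - transl m)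

lemma summable_Ker_smul_sub_transl (hs : s ∈ Set.Ioo 0 1) :
    Summable fun m => Ker s m • (1 - transl m) := by
  refine .of_norm_bounded ((summable_Ker hs).mul_right 2) fun m => ?_
  rw [norm_smul, Real.norm_of_nonneg (Ker_nonneg hs m)]
  refine mul_le_mul_of_nonneg_left ?_ (Ker_nonneg hs m)
  calc ‖1 - transl m‖ ≤ ‖(1 : ℓ² →L[ℝ] ℓ²)‖ + ‖transl m‖ := norm_sub_le _ _
    _ ≤ 1 + 1 := add_le_add ContinuousLinearMap.norm_id_le (norm_transl_le m)
    _ = 2 := one_add_one_eq_two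

lemma lapOp_apply (hs : s ∈ Set.Ioo 0 1) (g : ℓ²) (x : ℤ) : lapOp s g x = Lop s g x := by
  have hsum := ((summable_Ker_smul_sub_transl hs).hasSum.mapL
    (ContinuousLinearMap.apply ℝ ℓ² g))
  have h2 := hsum.mapL (lp.evalCLM ℝ (fun _ : ℤ => ℝ) 2 x)
  have hx : HasSum (fun m => Ker s m * (g x - g (x - m))) (lapOp s g x) := by
    convert h2 using 1 <;> rfl
  have h3 : HasSum (fun y => Ker s (x - y) * (g x - g y)) (lapOp s g x) := by
    rw [← (Equiv.subLeft x).hasSum_iff]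
    simpa [Function.comp_def] using hx
  rw [Lop, ← h3.tsum_eq]
  exact tsum_congr fun y => mul_comm _ _

lemma lapOp_pow_apply (hs : s ∈ Set.Ioo 0 1) (n : ℕ) (g : ℓ²) (x : ℤ) :
    (lapOp s ^ n) g x = (Lop s)^[n] g x := by
  induction n generalizing g with
  | zero => rfl
  | succ n ih =>
    rw [pow_succ, mul_apply_eq_comp, ih,
      Function.iterate_succ_apply, show ⇑(lapOp s g) = Lop s g from funext (lapOp_apply hs g)]

end Laplacian

section DirichletForm

variable {s : ℝ}

lemma summable_sq (g : ℓ²) : Summable fun x => g x ^ 2 := by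
  simpa [sq] using lp.summable_inner (𝕜 := ℝ) g g

lemma summable_Ker_sub_mul_sq (hs : s ∈ Set.Ioo 0 1) (g : ℓ²) :
    Summable fun p : ℤ × ℤ => Ker s (p.1 - p.2) * g p.1 ^ 2 := by
  have hK (x : ℤ) : HasSum (fun y => Ker s (x - y)) (∑' m, Ker s m) :=
    (Equiv.subLeft x).hasSum_iff (f := Ker s) |>.2 (summable_Ker hs).hasSum
  have hnn : 0 ≤ fun p : ℤ × ℤ => Ker s (p.1 - p.2) * g p.1 ^ 2 := fun p =>
    mul_nonneg (Ker_nonneg hs _) (sq_nonneg _)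
  have hfiber (x : ℤ) : Summable fun y => Ker s (x - y) * g x ^ 2 :=
    ((hK x).mul_right _).summable
  have hfibers : Summable fun x : ℤ => ∑' y, Ker s (x - y) * g x ^ 2 := by
    simp_rw [((hK _).mul_right _).tsum_eq]
    exact (summable_sq g).mul_left _
  exact (summable_prod_of_nonneg hnn).2 ⟨hfiber, hfibers⟩

lemma abs_mul_sub_le (a b : ℝ) : |a * (a - b)| ≤ 2 * (a ^ 2 + b ^ 2) :=
  abs_le.2 ⟨by nlinarith [sq_nonneg (a - b / 6)], by nlinarith [sq_nonneg (a + b)]⟩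

lemma summable_mul_sub_mul_Ker (hs : s ∈ Set.Ioo 0 1) (g : ℓ²) :
    Summable fun p : ℤ × ℤ => g p.1 * ((g p.1 - g p.2) * Ker s (p.1 - p.2)) := by
  have hQ := summable_Ker_sub_mul_sq hs g
  have hQ' : Summable fun p : ℤ × ℤ => Ker s (p.2 - p.1) * g p.2 ^ 2 :=
    (Equiv.prodComm ℤ ℤ).summable_iff.2 hQ
  refine .of_norm_bounded ((hQ.add hQ').mul_left 2) fun p => ?_
  rw [Ker_sub_comm p.2, Real.norm_eq_abs, ← mul_assoc, mul_comm, abs_mul,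
    abs_of_nonneg (Ker_nonneg hs _)]
  nlinarith [abs_mul_sub_le (g p.1) (g p.2), Ker_nonneg hs (p.1 - p.2)]

lemma hasSum_Ker_mul_sq_sub (hs : s ∈ Set.Ioo 0 1) (g : ℓ²) :
    HasSum (fun p : ℤ × ℤ => Ker s (p.2 - p.1) * (g p.1 - g p.2) ^ 2)
      (2 * ⟪lapOp s g, g⟫_ℝ) := by
  -- `K(y - x) (g x - g y)² = P (x, y) + P (y, x)`, and `∑ P = ⟪Lg, g⟫`.
  set P : ℤ × ℤ → ℝ := fun p => g p.1 * ((g p.1 - g p.2) * Ker s (p.1 - p.2))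
  have hP : Summable P := summable_mul_sub_mul_Ker hs g
  have hinner : ⟪lapOp s g, g⟫_ℝ = ∑' p, P p := by
    rw [lp.inner_eq_tsum, hP.tsum_prod]
    refine tsum_congr fun x => ?_
    simp [lapOp_apply hs, Lop, P, tsum_mul_left]
  have hswap : ∑' p : ℤ × ℤ, P p.swap = ∑' p, P p := (Equiv.prodComm ℤ ℤ).tsum_eq P
  convert hP.hasSum.add ((Equiv.prodComm ℤ ℤ).summable_iff.2 hP).hasSum using 1
  · funext p
    simp only [P, Function.comp_apply, Equiv.prodComm_apply, Prod.fst_swap, Prod.snd_swap,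
      Ker_sub_comm p.2]
    ring
  · rw [hinner, two_mul]
    exact congrArg _ hswap.symm

lemma hasSum_gradSq_apply (hs : s ∈ Set.Ioo 0 1) (g : ℓ²) (x : ℤ) :
    HasSum (fun y => Ker s (y - x) * (g x - g y) ^ 2) (gradSq s g x) :=
  ((hasSum_Ker_mul_sq_sub hs g).summable.prod_factor x).hasSum

lemma hasSum_gradSq (hs : s ∈ Set.Ioo 0 1) (g : ℓ²) :
    HasSum (gradSq s g) (2 * ⟪lapOp s g, g⟫_ℝ) :=
  (hasSum_Ker_mul_sq_sub hs g).prod_fiberwise (hasSum_gradSq_apply hs g)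

lemma gradSq_nonneg (hs : s ∈ Set.Ioo 0 1) (f : ℤ → ℝ) (x : ℤ) : 0 ≤ gradSq s f x :=
  tsum_nonneg fun _ => mul_nonneg (Ker_nonneg hs _) (sq_nonneg _)

lemma gradSq_le_two_inner_lapOp (hs : s ∈ Set.Ioo 0 1) (g : ℓ²) (x : ℤ) :
    gradSq s g x ≤ 2 * ⟪lapOp s g, g⟫_ℝ :=
  le_hasSum (hasSum_gradSq hs g) x fun y _ => gradSq_nonneg hs g y

lemma inner_lapOp_self_nonneg (hs : s ∈ Set.Ioo 0 1) (g : ℓ²) :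
    0 ≤ ⟪lapOp s g, g⟫_ℝ := by
  have := (hasSum_gradSq hs g).nonneg (gradSq_nonneg hs g)
  linarith

lemma Ker_mul_sq_le_gradSq (hs : s ∈ Set.Ioo 0 1) (g : ℓ²) (x y : ℤ) :
    Ker s (y - x) * (g x - g y) ^ 2 ≤ gradSq s g x :=
  le_hasSum (hasSum_gradSq_apply hs g x) y fun _ _ => mul_nonneg (Ker_nonneg hs _) (sq_nonneg _)

end DirichletForm

section HeatSemigroup

variable {s : ℝ}

noncomputable def heatOp (s t : ℝ) : ℓ² →L[ℝ] ℓ² := NormedSpace.exp (t • -lapOp s)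

lemma heat_eq_heatOp (hs : s ∈ Set.Ioo 0 1) (t : ℝ) (g : ℓ²) :
    heat s t g = heatOp s t g := by
  funext x
  have hsum := ((NormedSpace.expSeries_summable' (𝕂 := ℝ) (t • -lapOp s)).hasSum.mapL
    (ContinuousLinearMap.apply ℝ ℓ² g)).mapL (lp.evalCLM ℝ (fun _ : ℤ => ℝ) 2 x)
  have hx : HasSum (fun n => (n.factorial : ℝ)⁻¹ * ((t • -lapOp s) ^ n) g x)
      (heatOp s t g x) := by
    rw [heatOp, NormedSpace.exp_eq_tsum ℝ]
    convert hsum using 1 <;> rfl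
  rw [heat, ← hx.tsum_eq]
  refine tsum_congr fun n => ?_
  rw [show t • -lapOp s = (-t) • lapOp s by rw [smul_neg, neg_smul], smul_pow,
    smul_apply, lp.coeFn_smul, Pi.smul_apply, smul_eq_mul,
    lapOp_pow_apply hs]
  ring

lemma hasDerivAt_heatOp_apply (g : ℓ²) (t : ℝ) :
    HasDerivAt (fun τ => heatOp s τ g) (-lapOp s (heatOp s t g)) t :=
  (ContinuousLinearMap.apply ℝ ℓ² g).hasFDerivAt.comp_hasDerivAt t
    (hasDerivAt_exp_smul_const' (𝕂 := ℝ) (-lapOp s) t)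

lemma continuous_heatOp_apply (g : ℓ²) : Continuous fun t => heatOp s t g :=
  continuous_iff_continuousAt.2 fun t => (hasDerivAt_heatOp_apply g t).continuousAt

lemma heatOp_zero_apply (g : ℓ²) : heatOp s 0 g = g := by
  rw [heatOp, zero_smul, NormedSpace.exp_zero, one_apply_eq_self]

lemma hasDerivAt_norm_sq_heatOp_apply (g : ℓ²) (t : ℝ) :
    HasDerivAt (fun τ => ‖heatOp s τ g‖ ^ 2)
      (-(2 * ⟪lapOp s (heatOp s t g), heatOp s t g⟫_ℝ)) t := by
  convert (hasDerivAt_heatOp_apply g t).norm_sq using 1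
  rw [inner_neg_right, real_inner_comm, mul_neg]

end HeatSemigroup

section Integrability

variable {s : ℝ}

lemma continuous_inner_lapOp_heatOp (g : ℓ²) :
    Continuous fun t => ⟪lapOp s (heatOp s t g), heatOp s t g⟫_ℝ :=
  ((lapOp s).continuous.comp (continuous_heatOp_apply g)).inner (continuous_heatOp_apply g)

lemma integral_inner_lapOp_heatOp (g : ℓ²) (a b : ℝ) :
    ∫ t in a..b, 2 * ⟪lapOp s (heatOp s t g), heatOp s t g⟫_ℝ =
      ‖heatOp s a g‖ ^ 2 - ‖heatOp s b g‖ ^ 2 := by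
  have hFTC := intervalIntegral.integral_eq_sub_of_hasDerivAt
    (fun t _ => hasDerivAt_norm_sq_heatOp_apply (s := s) g t)
    (((continuous_inner_lapOp_heatOp g).const_mul 2).neg.intervalIntegrable a b)
  rw [intervalIntegral.integral_neg] at hFTC
  linarith

lemma integrableOn_inner_lapOp_heatOp (hs : s ∈ Set.Ioo 0 1) (g : ℓ²) :
    IntegrableOn (fun t => 2 * ⟪lapOp s (heatOp s t g), heatOp s t g⟫_ℝ) (Set.Ioi 0) := by
  have hcont := (continuous_inner_lapOp_heatOp (s := s) g).const_mul 2
  refine integrableOn_Ioi_of_intervalIntegral_norm_bounded (‖g‖ ^ 2) 0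
    (fun n : ℕ => hcont.integrableOn_Ioc) tendsto_natCast_atTop_atTop
    (.of_forall fun n => ?_)
  have hnn (t : ℝ) : 0 ≤ 2 * ⟪lapOp s (heatOp s t g), heatOp s t g⟫_ℝ := by
    have := inner_lapOp_self_nonneg hs (heatOp s t g)
    positivity
  simp_rw [Real.norm_of_nonneg (hnn _), integral_inner_lapOp_heatOp, heatOp_zero_apply]
  linarith [sq_nonneg ‖heatOp s n g‖]

lemma aestronglyMeasurable_gradSq_heatOp (hs : s ∈ Set.Ioo 0 1) (g : ℓ²) (x : ℤ)
    (μ : Measure ℝ) : AEStronglyMeasurable (fun t => gradSq s (heatOp s t g) x) μ := by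
  have hcoord (y : ℤ) : Continuous fun t => heatOp s t g y :=
    (lp.evalCLM ℝ (fun _ : ℤ => ℝ) 2 y).continuous.comp (continuous_heatOp_apply g)
  refine aestronglyMeasurable_of_tendsto_ae Filter.atTop
    (f := fun (S : Finset ℤ) t =>
      ∑ y ∈ S, Ker s (y - x) * (heatOp s t g x - heatOp s t g y) ^ 2)
    (fun S => Continuous.aestronglyMeasurable ?_)
    (.of_forall fun _ => hasSum_gradSq_apply hs _ x)
  fun_prop

lemma integrableOn_gradSq_heatOp (hs : s ∈ Set.Ioo 0 1) (g : ℓ²) (x : ℤ) :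
    IntegrableOn (fun t => gradSq s (heatOp s t g) x) (Set.Ioi 0) :=
  (integrableOn_inner_lapOp_heatOp hs g).mono' (aestronglyMeasurable_gradSq_heatOp hs g x _)
    (.of_forall fun _ => (Real.norm_of_nonneg (gradSq_nonneg hs _ x)).trans_le
      (gradSq_le_two_inner_lapOp hs _ x))

end Integrability

lemma quarter_le_sq_sub_of_norm_sub_single_le {g : ℓ²} {a x : ℤ} (hx : x ≠ a)
    (hg : ‖g - lp.single 2 a 1‖ ≤ 1 / 4) : 1 / 4 ≤ (g x - g a) ^ 2 := by
  have hcoord (y : ℤ) : |(g - lp.single 2 a 1 : ℓ²) y| ≤ 1 / 4 :=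
    (lp.norm_apply_le_norm two_ne_zero _ y).trans hg
  have hx' := abs_le.1 (hcoord x)
  have ha' := abs_le.1 (hcoord a)
  rw [lp.coeFn_sub, Pi.sub_apply, lp.single_apply_ne 2 a _ hx] at hx'
  rw [lp.coeFn_sub, Pi.sub_apply, lp.single_apply_self] at ha'
  nlinarith

lemma mul_le_setIntegral_Ioi {F : ℝ → ℝ} {c t₀ : ℝ} (ht₀ : 0 ≤ t₀)
    (hF : IntegrableOn F (Set.Ioi 0)) (hF0 : ∀ t ∈ Set.Ioi 0, 0 ≤ F t)
    (hc : ∀ t ∈ Set.Ioc 0 t₀, c ≤ F t) : t₀ * c ≤ ∫ t in Set.Ioi 0, F t := by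
  calc t₀ * c = ∫ _ in Set.Ioc 0 t₀, c := by
        rw [setIntegral_const, Real.volume_real_Ioc_of_le ht₀, sub_zero, smul_eq_mul]
    _ ≤ ∫ t in Set.Ioc 0 t₀, F t :=
        setIntegral_mono_on (integrableOn_const measure_Ioc_lt_top.ne)
          (hF.mono_set Set.Ioc_subset_Ioi_self) measurableSet_Ioc hc
    _ ≤ ∫ t in Set.Ioi 0, F t :=
        setIntegral_mono_set hF ((ae_restrict_iff' measurableSet_Ioi).2 (.of_forall hF0))
          Set.Ioc_subset_Ioi_self.eventuallyLE

theorem exists_pos_mul_rpow_le_integral_gradSq_heat {s : ℝ} (hs : s ∈ Set.Ioo 0 1) (a : ℤ) :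
    ∃ C > 0, ∀ x : ℤ, x ≠ a →
      C * |(x : ℝ) - a| ^ (-(1 + 2 * s)) ≤
        ∫ t in Set.Ioi 0, gradSq s (heat s t (fun y => if y = a then 1 else 0)) x := by
  set δ : ℓ² := lp.single 2 a 1
  have hδ : (fun y => if y = a then (1 : ℝ) else 0) = δ := by
    funext y
    simp [δ, lp.single_apply, Pi.single_apply]
  obtain ⟨ε, hε, hnear⟩ := Metric.continuousAt_iff.1
    ((continuous_heatOp_apply (s := s) δ).continuousAt (x := 0)) (1 / 4) (by norm_num)
  have hclose (t : ℝ) (ht : t ∈ Set.Ioc 0 (ε / 2)) : ‖heatOp s t δ - δ‖ ≤ 1 / 4 := by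
    have := @hnear t (by rw [Real.dist_eq, sub_zero, abs_of_pos ht.1]; linarith [ht.2])
    rw [heatOp_zero_apply, dist_eq_norm] at this
    exact this.le
  refine ⟨ε / 2 * (kerConst s / 2 / 4), by have := kerConst_pos hs; positivity, fun x hx => ?_⟩
  simp_rw [hδ, heat_eq_heatOp hs, mul_assoc]
  refine mul_le_setIntegral_Ioi (by positivity) (integrableOn_gradSq_heatOp hs δ x)
    (fun t _ => gradSq_nonneg hs _ x) fun t ht => ?_
  have hK := le_Ker hs (sub_ne_zero.2 hx.symm)
  rw [Int.cast_sub, abs_sub_comm] at hK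
  calc kerConst s / 2 / 4 * |(x : ℝ) - a| ^ (-(1 + 2 * s))
      = kerConst s / 2 * |(x : ℝ) - a| ^ (-(1 + 2 * s)) * (1 / 4) := by ring
    _ ≤ Ker s (a - x) * (heatOp s t δ x - heatOp s t δ a) ^ 2 :=
        mul_le_mul hK (quarter_le_sq_sub_of_norm_sub_single_le hx (hclose t ht)) (by norm_num)
          (Ker_nonneg hs _)
    _ ≤ gradSq s (heatOp s t δ) x := Ker_mul_sq_le_gradSq hs _ x a

/-- Counterexample lower bound: for `s = 1/4` and `f` the indicator of `{1}`, there is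
`C > 0` with `G f x ≥ C (x-1)^{-3/4}` for every integer `x > 1`. -/
theorem counterexample_lower_bound :
    ∃ C : ℝ, 0 < C ∧ ∀ x : ℤ, 1 < x →
      C * ((x : ℝ) - 1) ^ (-(3 / 4 : ℝ)) ≤
        Real.sqrt (∫ t in Set.Ioi (0 : ℝ),
          gradSq (1 / 4) (heat (1 / 4) t (fun y : ℤ => if y = 1 then (1 : ℝ) else 0)) x) := by
  obtain ⟨C, hC, hbound⟩ := exists_pos_mul_rpow_le_integral_gradSq_heat (s := 1 / 4)
    ⟨by norm_num, by norm_num⟩ 1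
  refine ⟨√C, Real.sqrt_pos.2 hC, fun x hx => ?_⟩
  have hx1 : (0 : ℝ) ≤ (x : ℝ) - 1 := by
    have : (1 : ℝ) < x := by exact_mod_cast hx
    linarith
  have h := hbound x hx.ne'
  rw [Int.cast_one, abs_of_nonneg hx1] at h
  calc √C * ((x : ℝ) - 1) ^ (-(3 / 4 : ℝ))
      = √(C * ((x : ℝ) - 1) ^ (-(1 + 2 * (1 / 4) : ℝ))) := by
        rw [Real.sqrt_mul hC.le, Real.sqrt_eq_rpow (_ ^ _), ← Real.rpow_mul hx1]
        norm_num
    _ ≤ _ := Real.sqrt_le_sqrt h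
end

section
/- Let q ∈ (1,2]. For every summable f : ℤ → ℝ with f ≥ 0 and every x ∈ ℤ, one has 0 ≤ |∇̃f|²(x) ≤ (2/(q(q−1))) · Γ_q(f)(x). -/
open MeasureTheory Real

/-- The pseudo-gradient `Γ_q(f) = q f · L f - f^{2-q} · L (f^q)` (real powers). -/
noncomputable def GammaQ (s q : ℝ) (f : ℤ → ℝ) : ℤ → ℝ :=
  fun x => q * f x * Lop s f x - f x ^ (2 - q) * Lop s (fun y => f y ^ q) x

lemma ker_nonneg {s : ℝ} (hs0 : 0 < s) (hs1 : s < 1) (m : ℤ) : 0 ≤ Ker s m := by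
  unfold Ker
  split
  · exact le_rfl
  · rename_i hm
    have hn : (1 : ℝ) ≤ (m.natAbs : ℝ) := by
      have := Int.natAbs_pos.mpr hm
      exact_mod_cast this
    apply mul_nonneg
    · apply div_nonneg
      · exact mul_nonneg (le_of_lt (Real.rpow_pos_of_pos (by norm_num) s))
          (Real.Gamma_pos_of_pos (by linarith)).le
      · exact mul_nonneg (Real.sqrt_nonneg _) (abs_nonneg _)
    · exact div_nonneg (Real.Gamma_pos_of_pos (by linarith)).le
        (Real.Gamma_pos_of_pos (by linarith)).le

lemma ker_symm (s : ℝ) (m : ℤ) : Ker s (-m) = Ker s m := by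
  unfold Ker
  simp [neg_eq_zero, Int.natAbs_neg]

-- log-convexity consequence: Γ(a + θ) ≥ Γ(a) * a ^ θ for a > 0, θ ≥ 1 (here θ = 1 + 2s)
lemma gamma_lower {a θ : ℝ} (ha : 0 < a) (hθ : 1 < θ) :
    Real.Gamma a * a ^ θ ≤ Real.Gamma (a + θ) := by
  have h1 : a ∈ Set.Ioi (0:ℝ) := ha
  have h3 : a + θ ∈ Set.Ioi (0:ℝ) := by simp; linarith
  have hs := Real.convexOn_log_Gamma.slope_mono_adjacent h1 h3
      (show a < a + 1 by linarith) (show a + 1 < a + θ by linarith)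
  have hG1 : Real.Gamma (a + 1) = a * Real.Gamma a := Real.Gamma_add_one ha.ne'
  have hGa : 0 < Real.Gamma a := Real.Gamma_pos_of_pos ha
  have hGz : 0 < Real.Gamma (a + θ) := Real.Gamma_pos_of_pos (by linarith)
  simp only [Function.comp] at hs
  rw [hG1, Real.log_mul ha.ne' hGa.ne'] at hs
  -- hs : (log a + log Γ a - log Γ a)/(a+1-a) ≤ (log Γ (a+θ) - (log a + log Γ a))/(a+θ-(a+1))
  have key : θ * Real.log a + Real.log (Real.Gamma a) ≤ Real.log (Real.Gamma (a + θ)) := by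
    have h2 : (0:ℝ) < θ - 1 := by linarith
    rw [show a + 1 - a = (1:ℝ) by ring, show a + θ - (a + 1) = θ - 1 by ring, div_one] at hs
    have hs' : Real.log a ≤ (Real.log (Real.Gamma (a + θ)) - (Real.log a + Real.log (Real.Gamma a))) / (θ - 1) := by
      calc Real.log a = Real.log a + Real.log (Real.Gamma a) - Real.log (Real.Gamma a) := by ring
        _ ≤ _ := hs
    rw [le_div_iff₀ h2] at hs'
    nlinarith
  calc Real.Gamma a * a ^ θ = Real.exp (Real.log (Real.Gamma a) + θ * Real.log a) := by
        rw [Real.exp_add, Real.exp_log hGa, Real.rpow_def_of_pos ha]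
        ring_nf
    _ ≤ Real.exp (Real.log (Real.Gamma (a + θ))) := by
        apply Real.exp_le_exp.mpr; linarith
    _ = Real.Gamma (a + θ) := Real.exp_log hGz

lemma ker_le {s : ℝ} (hs0 : 0 < s) (hs1 : s < 1) (m : ℤ) :
    Ker s m ≤ ((4:ℝ) ^ s * Real.Gamma (1 / 2 + s) / (Real.sqrt Real.pi * |Real.Gamma (-s)|))
      * (1 - s) ^ (-(1 + 2*s)) * ((m.natAbs : ℝ)) ^ (-(1 + 2*s)) := by
  set C : ℝ := (4:ℝ) ^ s * Real.Gamma (1 / 2 + s) / (Real.sqrt Real.pi * |Real.Gamma (-s)|) with hC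
  have hC0 : 0 ≤ C :=
    div_nonneg (mul_nonneg (Real.rpow_pos_of_pos (by norm_num) s).le
      (Real.Gamma_pos_of_pos (by linarith)).le)
      (mul_nonneg (Real.sqrt_nonneg _) (abs_nonneg _))
  unfold Ker
  split
  · rename_i h
    subst h
    exact mul_nonneg (mul_nonneg hC0 (Real.rpow_nonneg (by linarith) _))
      (Real.rpow_nonneg (by positivity) _)
  · rename_i hm
    have hn : (1 : ℝ) ≤ (m.natAbs : ℝ) := by exact_mod_cast Int.natAbs_pos.mpr hm
    set n : ℝ := (m.natAbs : ℝ)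
    have ha : 0 < n - s := by linarith
    have hθ : (1:ℝ) < 1 + 2*s := by linarith
    have h1 := gamma_lower ha hθ
    -- Γ(n - s + (1+2s)) = Γ(n + 1 + s)
    have hz : n - s + (1 + 2*s) = n + 1 + s := by ring
    rw [hz] at h1
    have hratio : Real.Gamma (n - s) / Real.Gamma (n + 1 + s) ≤ (n - s) ^ (-(1 + 2*s)) := by
      have hGz : 0 < Real.Gamma (n + 1 + s) := Real.Gamma_pos_of_pos (by linarith)
      have hpow : 0 < (n - s) ^ (1 + 2*s) := Real.rpow_pos_of_pos ha _
      rw [div_le_iff₀ hGz, Real.rpow_neg ha.le]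
      calc Real.Gamma (n - s)
            = Real.Gamma (n - s) * (n - s) ^ (1 + 2*s) * ((n - s) ^ (1 + 2*s))⁻¹ := by
              field_simp
        _ ≤ Real.Gamma (n + 1 + s) * ((n - s) ^ (1 + 2*s))⁻¹ :=
              mul_le_mul_of_nonneg_right h1 (by positivity)
        _ = ((n - s) ^ (1 + 2*s))⁻¹ * Real.Gamma (n + 1 + s) := mul_comm _ _
    have hpos : 0 < (1 - s) * n := by nlinarith
    have hle : (1 - s) * n ≤ n - s := by nlinarith
    calc C * (Real.Gamma (n - s) / Real.Gamma (n + 1 + s))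
          ≤ C * (n - s) ^ (-(1 + 2*s)) := mul_le_mul_of_nonneg_left hratio hC0
      _ ≤ C * ((1 - s) * n) ^ (-(1 + 2*s)) :=
            mul_le_mul_of_nonneg_left
              (Real.rpow_le_rpow_of_nonpos hpos hle (by linarith)) hC0
      _ = C * (1 - s) ^ (-(1 + 2*s)) * n ^ (-(1 + 2*s)) := by
            rw [Real.mul_rpow (by linarith) (by linarith), mul_assoc]

lemma ker_summable {s : ℝ} (hs0 : 0 < s) (hs1 : s < 1) : Summable (Ker s) := by
  set C' : ℝ := ((4:ℝ) ^ s * Real.Gamma (1 / 2 + s) / (Real.sqrt Real.pi * |Real.Gamma (-s)|))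
    * (1 - s) ^ (-(1 + 2*s)) with hC'
  have hnat : Summable (fun n : ℕ => C' * ((n:ℝ)) ^ (-(1 + 2*s))) :=
    (Real.summable_nat_rpow.mpr (by linarith)).mul_left C'
  have hbig : Summable (fun m : ℤ => C' * ((m.natAbs : ℝ)) ^ (-(1 + 2*s))) := by
    apply Summable.of_nat_of_neg_add_one
    · simpa using hnat
    · have h2 : Summable (fun n : ℕ => C' * (((n + 1 : ℕ) : ℝ)) ^ (-(1 + 2*s))) :=
        (summable_nat_add_iff 1).mpr hnat
      have he : (fun n : ℕ => C' * (((-((n:ℤ) + 1)).natAbs : ℝ)) ^ (-(1 + 2*s)))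
          = fun n : ℕ => C' * (((n + 1 : ℕ) : ℝ)) ^ (-(1 + 2*s)) := by
        funext n
        have hna : ((-((n:ℤ) + 1)).natAbs) = n + 1 := by omega
        rw [hna]
      exact he ▸ h2
  exact Summable.of_nonneg_of_le (ker_nonneg hs0 hs1) (ker_le hs0 hs1) hbig

-- case b ≥ a : nonnegativity
lemma key_ge {q a b : ℝ} (hq1 : 1 < q) (hq2 : q ≤ 2) (ha : 0 ≤ a) (hab : a ≤ b) :
    0 ≤ q * a * (a - b) - a ^ (2 - q) * (a ^ q - b ^ q) := by
  rcases eq_or_lt_of_le ha with h0 | ha0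
  · -- a = 0
    rw [← h0]
    rw [Real.zero_rpow (by positivity : q ≠ 0)]
    have : (0:ℝ) ≤ (0:ℝ) ^ (2 - q) * b ^ q :=
      mul_nonneg (Real.rpow_nonneg le_rfl _) (Real.rpow_nonneg (le_trans ha hab) _)
    nlinarith
  · -- a > 0 : F monotone on [a, ∞)
    set F : ℝ → ℝ := fun t => q * a * (a - t) - a ^ (2 - q) * (a ^ q - t ^ q) with hF
    have hder : ∀ t : ℝ, HasDerivAt F (q * a * (-1) - a ^ (2 - q) * (-(q * t ^ (q - 1)))) t := by
      intro t
      have h1 : HasDerivAt (fun t : ℝ => a - t) (-1) t := (hasDerivAt_id t).const_sub a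
      have h2 : HasDerivAt (fun t : ℝ => t ^ q) (q * t ^ (q - 1)) t :=
        Real.hasDerivAt_rpow_const (Or.inr hq1.le)
      exact ((h1.const_mul (q * a)).sub ((h2.const_sub (a ^ q)).const_mul (a ^ (2 - q))))
    have hmono : MonotoneOn F (Set.Ici a) := by
      apply monotoneOn_of_deriv_nonneg (convex_Ici a)
      · exact fun t _ => (hder t).continuousAt.continuousWithinAt
      · exact fun t _ => (hder t).differentiableAt.differentiableWithinAt
      · intro t ht
        rw [interior_Ici] at ht
        rw [(hder t).deriv]
        have ht0 : 0 < t := lt_trans ha0 ht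
        have hrp : a ^ (q - 1) ≤ t ^ (q - 1) :=
          Real.rpow_le_rpow ha (le_of_lt ht) (by linarith)
        have haa : a ^ (2 - q) * a ^ (q - 1) = a := by
          rw [← Real.rpow_add ha0]
          norm_num
        have h2q : 0 < a ^ (2 - q) := Real.rpow_pos_of_pos ha0 _
        nlinarith [mul_le_mul_of_nonneg_left hrp h2q.le]
    have := hmono (Set.self_mem_Ici) (Set.mem_Ici.mpr hab) hab
    have hFa : F a = 0 := by simp [hF]
    rw [hFa] at this
    exact this

-- case b < a : quantitative lower bound
lemma key_lt {q a b : ℝ} (hq1 : 1 < q) (hq2 : q ≤ 2) (hb : 0 ≤ b) (hab : b < a) :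
    q * (q - 1) / 2 * (a - b) ^ 2 ≤ q * a * (a - b) - a ^ (2 - q) * (a ^ q - b ^ q) := by
  have ha0 : 0 < a := lt_of_le_of_lt hb hab
  set G : ℝ → ℝ := fun t =>
    q * a * (a - t) - a ^ (2 - q) * (a ^ q - t ^ q) - q * (q - 1) / 2 * (a - t) ^ 2 with hG
  have hder : ∀ t : ℝ, HasDerivAt G
      ((q * a * (-1) - a ^ (2 - q) * (-(q * t ^ (q - 1)))) -
        q * (q - 1) / 2 * (2 * (a - t) ^ 1 * (-1))) t := by
    intro t
    have h1 : HasDerivAt (fun t : ℝ => a - t) (-1) t := (hasDerivAt_id t).const_sub a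
    have h2 : HasDerivAt (fun t : ℝ => t ^ q) (q * t ^ (q - 1)) t :=
      Real.hasDerivAt_rpow_const (Or.inr hq1.le)
    have h3 : HasDerivAt (fun t : ℝ => (a - t) ^ 2) (2 * (a - t) ^ 1 * (-1)) t := by
      exact_mod_cast h1.pow 2
    exact ((h1.const_mul (q * a)).sub ((h2.const_sub (a ^ q)).const_mul (a ^ (2 - q)))).sub
      (h3.const_mul (q * (q - 1) / 2))
  have hanti : AntitoneOn G (Set.Icc 0 a) := by
    apply antitoneOn_of_deriv_nonpos (convex_Icc 0 a)
    · exact fun t _ => (hder t).continuousAt.continuousWithinAt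
    · exact fun t ht => (hder t).differentiableAt.differentiableWithinAt
    · intro t ht
      rw [interior_Icc] at ht
      obtain ⟨ht0, hta⟩ := ht
      rw [(hder t).deriv]
      have hamgm : a ^ (2 - q) * t ^ (q - 1) ≤ (2 - q) * a + (q - 1) * t :=
        Real.geom_mean_le_arith_mean2_weighted (by linarith) (by linarith) ha0.le ht0.le
          (by ring)
      nlinarith [mul_le_mul_of_nonneg_left hamgm (by linarith : (0:ℝ) ≤ q)]
  have h := hanti (Set.mem_Icc.mpr ⟨hb, hab.le⟩) (Set.mem_Icc.mpr ⟨ha0.le, le_rfl⟩) hab.le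
  have hGa : G a = 0 := by simp [hG]
  rw [hGa] at h
  -- h : 0 ≤ G b
  have : 0 ≤ q * a * (a - b) - a ^ (2 - q) * (a ^ q - b ^ q) - q * (q - 1) / 2 * (a - b) ^ 2 := h
  linarith

/-- The modified gradient is controlled pointwise by the pseudo-gradient:
`0 ≤ |∇̃ f|²(x) ≤ (2/(q(q-1))) Γ_q(f)(x)`. -/
theorem mgradSq_le_gammaQ (s : ℝ) (hs : s ∈ Set.Ioo (0 : ℝ) 1) (q : ℝ)
    (hq : q ∈ Set.Ioc (1 : ℝ) 2) (f : ℤ → ℝ) (hf : Summable f) (hf0 : ∀ x, 0 ≤ f x)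
    (x : ℤ) :
    0 ≤ mgradSq s f x ∧ mgradSq s f x ≤ 2 / (q * (q - 1)) * GammaQ s q f x := by
  obtain ⟨hs0, hs1⟩ := hs
  obtain ⟨hq1, hq2⟩ := hq
  have hker : ∀ m, 0 ≤ Ker s m := ker_nonneg hs0 hs1
  constructor
  · exact tsum_nonneg fun y => mul_nonneg (hker _) (sq_nonneg _)
  have hKx : Summable (fun y : ℤ => Ker s (x - y)) :=
    (ker_summable hs0 hs1).comp_injective (fun y₁ y₂ h => by omega)
  set M : ℝ := ∑' y, f y with hM
  have hfle : ∀ y, f y ≤ M := fun y => Summable.le_tsum hf y (fun _ _ => hf0 _)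
  have hqpos : (0:ℝ) < q * (q - 1) := by nlinarith
  -- summability of the building blocks
  have hS1 : Summable (fun y : ℤ => (f x - f y) * Ker s (x - y)) := by
    have ha : Summable (fun y : ℤ => f x * Ker s (x - y)) := hKx.mul_left _
    have hb : Summable (fun y : ℤ => f y * Ker s (x - y)) :=
      Summable.of_nonneg_of_le (fun y => mul_nonneg (hf0 y) (hker _))
        (fun y => mul_le_mul_of_nonneg_right (hfle y) (hker _)) (hKx.mul_left M)
    simpa [sub_mul] using ha.sub hb
  have hS2 : Summable (fun y : ℤ => (f x ^ q - f y ^ q) * Ker s (x - y)) := by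
    have ha : Summable (fun y : ℤ => f x ^ q * Ker s (x - y)) := hKx.mul_left _
    have hb : Summable (fun y : ℤ => f y ^ q * Ker s (x - y)) :=
      Summable.of_nonneg_of_le (fun y => mul_nonneg (Real.rpow_nonneg (hf0 y) _) (hker _))
        (fun y => mul_le_mul_of_nonneg_right
          (Real.rpow_le_rpow (hf0 y) (hfle y) (by linarith)) (hker _))
        ((hKx.mul_left (M ^ q)))
    simpa [sub_mul] using ha.sub hb
  have hA : Summable (fun y : ℤ => q * f x * ((f x - f y) * Ker s (x - y))) := hS1.mul_left _
  have hB : Summable (fun y : ℤ =>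
      f x ^ (2 - q) * ((f x ^ q - f y ^ q) * Ker s (x - y))) := hS2.mul_left _
  set T : ℤ → ℝ := fun y => 2 / (q * (q - 1)) *
    (q * f x * ((f x - f y) * Ker s (x - y)) -
      f x ^ (2 - q) * ((f x ^ q - f y ^ q) * Ker s (x - y))) with hT
  have hTsum : Summable T := (hA.sub hB).mul_left _
  have hRHS : 2 / (q * (q - 1)) * GammaQ s q f x = ∑' y, T y := by
    rw [hT, tsum_mul_left]
    congr 1
    rw [GammaQ]
    show q * f x * Lop s f x - f x ^ (2-q) * Lop s (fun y => f y ^ q) x = _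
    rw [Lop, Lop, ← tsum_mul_left, ← tsum_mul_left, ← Summable.tsum_sub hA hB]
  -- pointwise inequality for the indicator function
  set S : Set ℤ := {y : ℤ | |f y| < |f x|} with hSdef
  have habs : ∀ y : ℤ, (|f y| < |f x|) ↔ f y < f x := by
    intro y; rw [abs_of_nonneg (hf0 y), abs_of_nonneg (hf0 x)]
  have hgy : ∀ y : ℤ, 0 ≤ q * f x * (f x - f y) - f x ^ (2 - q) * (f x ^ q - f y ^ q) := by
    intro y
    rcases lt_or_ge (f y) (f x) with h | h
    · have := key_lt hq1 hq2 (hf0 y) h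
      nlinarith [sq_nonneg (f x - f y)]
    · exact key_ge hq1 hq2 (hf0 x) h
  have hTy : ∀ y : ℤ, T y = 2 / (q * (q - 1)) *
      ((q * f x * (f x - f y) - f x ^ (2 - q) * (f x ^ q - f y ^ q)) * Ker s (x - y)) := by
    intro y; rw [hT]; ring
  have hc' : (0:ℝ) < 2 / (q * (q - 1)) := by positivity
  have hTnn : ∀ y : ℤ, 0 ≤ T y := by
    intro y
    rw [hTy y]
    exact mul_nonneg hc'.le (mul_nonneg (hgy y) (hker _))
  have hpt : ∀ y : ℤ,
      S.indicator (fun y => Ker s (y - x) * (f x - f y) ^ 2) y ≤ T y := by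
    intro y
    by_cases hy : y ∈ S
    · rw [Set.indicator_of_mem hy]
      have hfy : f y < f x := (habs y).mp hy
      have hk := key_lt hq1 hq2 (hf0 y) hfy
      have hsym : Ker s (y - x) = Ker s (x - y) := by rw [← ker_symm s (x - y), neg_sub]
      rw [hsym, hTy y]
      set g : ℝ := q * f x * (f x - f y) - f x ^ (2 - q) * (f x ^ q - f y ^ q) with hg
      have hcc : 2 / (q * (q - 1)) * (q * (q - 1) / 2) = 1 := by field_simp
      have h2 : (f x - f y) ^ 2 ≤ 2 / (q * (q - 1)) * g := by
        calc (f x - f y) ^ 2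
            = 2 / (q * (q - 1)) * (q * (q - 1) / 2 * (f x - f y) ^ 2) := by
              rw [← mul_assoc, hcc, one_mul]
          _ ≤ 2 / (q * (q - 1)) * g := mul_le_mul_of_nonneg_left hk hc'.le
      calc Ker s (x - y) * (f x - f y) ^ 2
          ≤ Ker s (x - y) * (2 / (q * (q - 1)) * g) :=
            mul_le_mul_of_nonneg_left h2 (hker _)
        _ = 2 / (q * (q - 1)) * (g * Ker s (x - y)) := by ring
    · rw [Set.indicator_of_notMem hy]
      exact hTnn y
  have hmg : mgradSq s f x
      = ∑' y : ℤ, S.indicator (fun y => Ker s (y - x) * (f x - f y) ^ 2) y := by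
    unfold mgradSq
    exact tsum_subtype S fun y => Ker s (y - x) * (f x - f y) ^ 2
  have hIsum : Summable (S.indicator (fun y => Ker s (y - x) * (f x - f y) ^ 2)) :=
    Summable.of_nonneg_of_le
      (fun y => Set.indicator_nonneg (fun z _ => mul_nonneg (hker _) (sq_nonneg _)) y)
      hpt hTsum
  rw [hmg, hRHS]
  exact Summable.tsum_le_tsum hpt hIsum hTsum
end

section
/- Let q ∈ (1,2]. For all real numbers s, t ≥ 0, t^q − s^q = q·s^{q−1}·(t−s) + q(q−1)·(t−s)² · ∫₀¹ (1−u)/((1−u)s + ut)^{2−q} du, where powers are real powers (with the convention 0^{q−1} = 0). -/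
/-! With `γ u = (1 - u) * s + u * t`, the identity is the first-order Taylor formula with integral
remainder for `u ↦ γ u ^ q` on `[0, 1]`: the function `(1 - u) * (γ ^ q)' u + γ u ^ q` has derivative
`(1 - u) * q (q - 1) (t - s)² γ u ^ (q - 2)`. When `s` or `t` vanishes this derivative blows up at an
endpoint, but it is nonnegative, and a nonnegative derivative of a function continuous on a closed
interval is integrable, so the fundamental theorem of calculus still applies. -/

open MeasureTheory Real

open Set intervalIntegral

theorem intervalIntegral.integral_eq_sub_of_hasDerivAt_of_nonneg {f f' : ℝ → ℝ} {a b : ℝ}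
    (hab : a ≤ b) (hcont : ContinuousOn f (Icc a b))
    (hderiv : ∀ x ∈ Ioo a b, HasDerivAt f (f' x) x) (hnonneg : ∀ x ∈ Ioo a b, 0 ≤ f' x) :
    ∫ x in a..b, f' x = f b - f a :=
  integral_eq_sub_of_hasDerivAt_of_le hab hcont hderiv <|
    (intervalIntegrable_iff_integrableOn_Ioc_of_le hab).2
      (integrableOn_deriv_of_nonneg hcont hderiv hnonneg)

theorem taylor_integral_remainder_of_nonneg {f f' f'' : ℝ → ℝ} {a b : ℝ} (hab : a ≤ b)
    (hf : ContinuousOn f (Icc a b)) (hf' : ContinuousOn f' (Icc a b))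
    (hderiv : ∀ x ∈ Ioo a b, HasDerivAt f (f' x) x)
    (hderiv' : ∀ x ∈ Ioo a b, HasDerivAt f' (f'' x) x) (hnonneg : ∀ x ∈ Ioo a b, 0 ≤ f'' x) :
    ∫ x in a..b, (b - x) * f'' x = f b - f a - f' a * (b - a) := by
  have hF : ∀ x ∈ Ioo a b,
      HasDerivAt (fun y => (b - y) * f' y + f y) ((b - x) * f'' x) x := fun x hx =>
    ((((hasDerivAt_id x).const_sub b).mul (hderiv' x hx)).add (hderiv x hx)).congr_deriv
      (by simp only [id_eq]; ring)
  rw [integral_eq_sub_of_hasDerivAt_of_nonneg (f := fun y => (b - y) * f' y + f y) hab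
    (((continuousOn_const.sub continuousOn_id).mul hf').add hf) hF
    (fun x hx => mul_nonneg (sub_nonneg.2 hx.2.le) (hnonneg x hx))]
  ring

theorem rpow_sub_rpow_sub_mul_eq_integral {q s t : ℝ} (hq : 1 < q) (hs : 0 ≤ s) (ht : 0 ≤ t) :
    t ^ q - s ^ q - q * s ^ (q - 1) * (t - s) =
      q * (q - 1) * (t - s) ^ 2 * ∫ u in (0 : ℝ)..1, (1 - u) * ((1 - u) * s + u * t) ^ (q - 2) := by
  rcases eq_or_ne s t with rfl | hst
  · simp
  have hγ : ∀ u, HasDerivAt (fun u => (1 - u) * s + u * t) (t - s) u := fun u =>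
    ((((hasDerivAt_id u).const_sub 1).mul_const s).add ((hasDerivAt_id u).mul_const t)).congr_deriv
      (by ring)
  have hγ_cont : Continuous fun u : ℝ => (1 - u) * s + u * t := by fun_prop
  have hγ_pos : ∀ u ∈ Ioo (0 : ℝ) 1, 0 < (1 - u) * s + u * t := fun u ⟨hu0, hu1⟩ => by
    rcases hs.lt_or_eq with hs | rfl
    · have := sub_pos.2 hu1
      positivity
    · simpa using mul_pos hu0 (ht.lt_of_ne hst)
  have key := taylor_integral_remainder_of_nonneg
    (f := fun u => ((1 - u) * s + u * t) ^ q)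
    (f' := fun u => q * (t - s) * ((1 - u) * s + u * t) ^ (q - 1))
    (f'' := fun u => q * (q - 1) * (t - s) ^ 2 * ((1 - u) * s + u * t) ^ (q - 2)) zero_le_one
    (hγ_cont.continuousOn.rpow_const fun _ _ => Or.inr (by linarith))
    (continuousOn_const.mul <| hγ_cont.continuousOn.rpow_const fun _ _ => Or.inr (by linarith))
    (fun u hu => ((hγ u).rpow_const (Or.inl (hγ_pos u hu).ne')).congr_deriv (by ring))
    (fun u hu => (((hγ u).rpow_const (p := q - 1) (Or.inl (hγ_pos u hu).ne')).const_mul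
      (q * (t - s))).congr_deriv (by rw [sub_sub, one_add_one_eq_two]; ring))
    (fun u hu => by
      have := (hγ_pos u hu).le
      have := sub_pos.2 hq
      positivity)
  rw [← intervalIntegral.integral_const_mul]
  convert key.symm using 1
  · simp only [sub_self, sub_zero, zero_mul, one_mul, zero_add, add_zero, mul_one]
    ring
  · congr 1 with u
    ring

/-- Taylor-type identity with integral remainder: for `q ∈ (1,2]` and `s, t ≥ 0`,
`t^q - s^q = q s^{q-1} (t-s) + q(q-1)(t-s)² ∫₀¹ (1-u)/((1-u)s + ut)^{2-q} du`
(real powers, with the rpow convention `0^{q-1} = 0`). -/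
theorem rpow_taylor_identity (q : ℝ) (hq : q ∈ Set.Ioc (1 : ℝ) 2) (s t : ℝ)
    (hs : 0 ≤ s) (ht : 0 ≤ t) :
    t ^ q - s ^ q = q * s ^ (q - 1) * (t - s) +
      q * (q - 1) * (t - s) ^ 2 *
        ∫ u in (0 : ℝ)..1, (1 - u) / ((1 - u) * s + u * t) ^ (2 - q) := by
  have hintegrand : EqOn (fun u => (1 - u) / ((1 - u) * s + u * t) ^ (2 - q))
      (fun u => (1 - u) * ((1 - u) * s + u * t) ^ (q - 2)) (uIcc 0 1) := fun u hu => by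
    rw [uIcc_of_le zero_le_one] at hu
    have := sub_nonneg.2 hu.2
    have hγ : 0 ≤ (1 - u) * s + u * t := by have := hu.1; positivity
    simp only [div_eq_mul_inv, ← rpow_neg hγ, neg_sub]
  rw [integral_congr hintegrand, ← rpow_sub_rpow_sub_mul_eq_integral hq.1 hs ht]
  ring
end
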